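/- For each 1 ≤ m ≤ n, the vector v_m ∈ ℝ^{n+2} with components v_m(0) = 1, v_m(j) = λ_m·Ũ_{j−1}^{(m)}/√q − Ũ_{j−2}^{(m)}/√p for 1 ≤ j ≤ n, and v_m(n+1) = √q·(λ_m·Ũ_n^{(m)}/√q − Ũ_{n−1}^{(m)}/√p) has squared Euclidean norm ‖v_m‖² = ((n+1)/(2p)) · (1 − λ_m²)/sin²θ_m. -/

import Mathlib

open Filter Finset

/-- The `(n+2) × (n+2)` Jacobi matrix of the reflected random walk on the path:
zero diagonal, `J(0,1) = √q`, `J(i,i+1) = √(pq)` for `1 ≤ i ≤ n-1`, `J(n,n+1) = √p`,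
and symmetric. -/
noncomputable def jacobiM (p q : ℝ) (n : ℕ) : Matrix (Fin (n + 2)) (Fin (n + 2)) ℝ :=
  fun k l =>
    if k.1 + 1 = l.1 then
      (if k.1 = 0 then Real.sqrt q else if k.1 = n then Real.sqrt p else Real.sqrt (p * q))
    else if l.1 + 1 = k.1 then
      (if l.1 = 0 then Real.sqrt q else if l.1 = n then Real.sqrt p else Real.sqrt (p * q))
    else 0

/-- `θ_m = mπ/(n+1)`. -/
noncomputable def thetaAngle (n m : ℕ) : ℝ := m * Real.pi / (n + 1)

/-- `λ_m = 2√(pq)·cos θ_m`. -/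
noncomputable def lamEig (p q : ℝ) (n m : ℕ) : ℝ :=
  2 * Real.sqrt (p * q) * Real.cos (thetaAngle n m)

/-- `Ũ_k^{(m)} = sin((k+1)θ_m)/sin θ_m` for integers `k ≥ -1`
(so `Ũ_{-1}^{(m)} = 0` and `Ũ_0^{(m)} = 1`). -/
noncomputable def Ubar (n m : ℕ) (k : ℤ) : ℝ :=
  Real.sin ((k + 1) * thetaAngle n m) / Real.sin (thetaAngle n m)

/-- The vector `v_m` with `v_m(0) = 1`,
`v_m(j) = λ_m·Ũ_{j-1}^{(m)}/√q - Ũ_{j-2}^{(m)}/√p` for `1 ≤ j ≤ n`, and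
`v_m(n+1) = √q·(λ_m·Ũ_n^{(m)}/√q - Ũ_{n-1}^{(m)}/√p)`. -/
noncomputable def vVec (p q : ℝ) (n m : ℕ) : Fin (n + 2) → ℝ :=
  fun j =>
    if j.1 = 0 then 1
    else if j.1 = n + 1 then
      Real.sqrt q *
        (lamEig p q n m * Ubar n m (n : ℤ) / Real.sqrt q - Ubar n m ((n : ℤ) - 1) / Real.sqrt p)
    else
      lamEig p q n m * Ubar n m ((j.1 : ℤ) - 1) / Real.sqrt q
        - Ubar n m ((j.1 : ℤ) - 2) / Real.sqrt p

/-! For `1 ≤ j ≤ n` the recurrence `2 cos θ · sin jθ = sin (j+1)θ + sin (j-1)θ` turns `v_m(j)` into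
`(p sin (j+1)θ - q sin (j-1)θ) / (√p sin θ)`, and `v_m(n+1)² = q/p` because `sin (n+1)θ = 0`.
Expanding the squares, everything reduces to `∑_{k<N} sin² kθ = N/2` whenever
`sin Nθ = 0 ≠ sin θ`, which follows by telescoping `2 sin θ cos 2kθ = sin (2k+1)θ - sin (2k-1)θ`. -/

open Real

lemma sum_range_cos_two_mul_mul_eq_zero {θ : ℝ} {N : ℕ} (hθ : sin θ ≠ 0)
    (hN : sin (N * θ) = 0) : ∑ k ∈ range N, cos (2 * (k * θ)) = 0 := by
  have telescope : ∀ k : ℕ, sin ((2 * (k + 1 : ℕ) - 1) * θ) - sin ((2 * k - 1) * θ) =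
      2 * sin θ * cos (2 * (k * θ)) := by
    intro k
    rw [sin_sub_sin]
    congr 3 <;> push_cast <;> ring
  have hsum := sum_range_sub (fun k : ℕ => sin ((2 * k - 1) * θ)) N
  simp only [telescope, ← mul_sum] at hsum
  have h2N : sin ((2 * N - 1) * θ) = - sin θ := by
    rw [show (2 * N - 1) * θ = 2 * (N * θ) - θ by ring, sin_sub, sin_two_mul, cos_two_mul,
      cos_sq', hN]
    ring
  rw [h2N, Nat.cast_zero, mul_zero, zero_sub, neg_one_mul, sin_neg, sub_neg_eq_add,
    neg_add_cancel] at hsum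
  exact (mul_eq_zero.mp hsum).resolve_left (mul_ne_zero two_ne_zero hθ)

lemma sum_range_sin_sq_of_sin_eq_zero {θ : ℝ} {N : ℕ} (hθ : sin θ ≠ 0)
    (hN : sin (N * θ) = 0) : ∑ k ∈ range N, sin (k * θ) ^ 2 = N / 2 := by
  simp only [sin_sq_eq_half_sub, sum_sub_distrib, ← sum_div,
    sum_range_cos_two_mul_mul_eq_zero hθ hN]
  simp

lemma sin_add_sq_of_sin_eq_zero {a : ℝ} (ha : sin a = 0) (x : ℝ) :
    sin (a + x) ^ 2 = sin x ^ 2 := by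
  rw [sin_add, ha, zero_mul, zero_add, mul_pow, cos_sq', ha]
  ring

lemma sin_add_mul_sin_sub (x y : ℝ) : sin (x + y) * sin (x - y) = sin x ^ 2 - sin y ^ 2 := by
  rw [sin_add, sin_sub]
  linear_combination sin x ^ 2 * sin_sq_add_cos_sq y - sin y ^ 2 * sin_sq_add_cos_sq x

lemma sum_range_sq_mul_sin_sub_mul_sin {θ : ℝ} {N : ℕ} (a b : ℝ) (hθ : sin θ ≠ 0)
    (hN : sin ((N + 1) * θ) = 0) :
    ∑ i ∈ range N, (a * sin ((i + 2) * θ) - b * sin (i * θ)) ^ 2 =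
      (a - b) ^ 2 * (N + 1) / 2 - (a ^ 2 + b ^ 2 - 2 * a * b * N) * sin θ ^ 2 := by
  have hN' : sin ((N + 1 : ℕ) * θ) = 0 := by exact_mod_cast hN
  have full := sum_range_sin_sq_of_sin_eq_zero hθ hN'
  have shift₁ : ∑ i ∈ range N, sin ((i + 1) * θ) ^ 2 = (N + 1) / 2 := by
    rw [sum_range_succ'] at full
    push_cast at full
    simpa using full
  have shift₂ : ∑ i ∈ range N, sin ((i + 2) * θ) ^ 2 = (N + 1) / 2 - sin θ ^ 2 := by
    have h := sum_range_succ (fun k : ℕ => sin (k * θ) ^ 2) (N + 1)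
    rw [full, hN', sum_range_succ', sum_range_succ'] at h
    push_cast at h
    simp only [one_add_one_eq_two, add_assoc, one_mul, zero_mul, sin_zero] at h
    linarith
  have lower : ∑ i ∈ range N, sin (i * θ) ^ 2 = (N + 1) / 2 - sin θ ^ 2 := by
    have hlast : sin (N * θ) ^ 2 = sin θ ^ 2 := by
      rw [show (N : ℝ) * θ = (N + 1) * θ + -θ by ring, sin_add_sq_of_sin_eq_zero hN, sin_neg,
        neg_sq]
    have h := full
    rw [sum_range_succ, hlast] at h
    push_cast at h
    linarith
  have cross : ∑ i ∈ range N, sin ((i + 2) * θ) * sin (i * θ) = (N + 1) / 2 - N * sin θ ^ 2 := by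
    have h : ∀ i : ℕ, sin ((i + 2) * θ) * sin (i * θ) = sin ((i + 1) * θ) ^ 2 - sin θ ^ 2 := by
      intro i
      rw [← sin_add_mul_sin_sub]
      ring_nf
    simp only [h, sum_sub_distrib, shift₁, sum_const, card_range, nsmul_eq_mul]
  have expand : ∀ i : ℕ, (a * sin ((i + 2) * θ) - b * sin (i * θ)) ^ 2 =
      a ^ 2 * sin ((i + 2) * θ) ^ 2 + b ^ 2 * sin (i * θ) ^ 2
        - 2 * a * b * (sin ((i + 2) * θ) * sin (i * θ)) := fun i => by ring
  simp only [expand, sum_add_distrib, sum_sub_distrib, ← mul_sum, shift₂, lower, cross]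
  ring

lemma succ_mul_thetaAngle (n m : ℕ) : (n + 1) * thetaAngle n m = m * π := by
  unfold thetaAngle
  field_simp

lemma sin_succ_mul_thetaAngle (n m : ℕ) : sin ((n + 1) * thetaAngle n m) = 0 := by
  rw [succ_mul_thetaAngle, sin_nat_mul_pi]

lemma sin_thetaAngle_pos {n m : ℕ} (hm : 1 ≤ m) (hmn : m ≤ n) : 0 < sin (thetaAngle n m) := by
  have hm' : (1 : ℝ) ≤ m := by exact_mod_cast hm
  have hmn' : (m : ℝ) < n + 1 := by exact_mod_cast Nat.lt_succ_of_le hmn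
  apply sin_pos_of_pos_of_lt_pi
  · unfold thetaAngle; positivity
  · rw [thetaAngle, div_lt_iff₀ (by positivity)]
    nlinarith [pi_pos]

lemma vVec_zero (p q : ℝ) (n m : ℕ) : vVec p q n m 0 = 1 := by
  simp [vVec]

lemma vVec_succ_castSucc {p q : ℝ} (hp : 0 < p) (hq : 0 < q) (hpq : p + q = 1) {n m : ℕ}
    (hs : sin (thetaAngle n m) ≠ 0) (i : Fin n) :
    vVec p q n m i.castSucc.succ =
      (p * sin ((i + 2) * thetaAngle n m) - q * sin (i * thetaAngle n m))
        / (√p * sin (thetaAngle n m)) := by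
  have hi : (i : ℕ) + 1 ≠ n + 1 := by omega
  simp only [vVec, Fin.val_succ, Fin.val_castSucc, Nat.succ_ne_zero, hi, if_false, Ubar, lamEig]
  push_cast
  set θ := thetaAngle n m
  set x := ((i : ℝ) + 1) * θ
  rw [show ((i : ℝ) + 1 - 1 + 1) * θ = x by ring, show ((i : ℝ) + 1 - 2 + 1) * θ = x - θ by ring,
    show ((i : ℝ) + 2) * θ = x + θ by ring, show (i : ℝ) * θ = x - θ by ring,
    sqrt_mul hp.le]
  have hsp : √p ^ 2 = p := sq_sqrt hp.le
  have hsp0 : √p ≠ 0 := by positivity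
  have hsq0 : √q ≠ 0 := by positivity
  field_simp
  linear_combination p * two_mul_sin_mul_cos x θ + (2 * cos θ * sin x) * hsp + sin (x - θ) * hpq

lemma vVec_last_sq {p q : ℝ} (hp : 0 < p) (hq : 0 ≤ q) {n m : ℕ}
    (hs : sin (thetaAngle n m) ≠ 0) : vVec p q n m (Fin.last (n + 1)) ^ 2 = q / p := by
  simp only [vVec, Fin.val_last, Nat.succ_ne_zero, if_false, if_true, Ubar]
  push_cast
  have hn : sin (((n : ℝ) - 1 + 1) * thetaAngle n m) ^ 2 = sin (thetaAngle n m) ^ 2 := by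
    set θ := thetaAngle n m
    rw [show ((n : ℝ) - 1 + 1) * θ = (n + 1) * θ + -θ by ring,
      sin_add_sq_of_sin_eq_zero (sin_succ_mul_thetaAngle n m), sin_neg, neg_sq]
  rw [sin_succ_mul_thetaAngle, zero_div, mul_zero, zero_div, zero_sub, mul_neg, neg_sq, mul_pow,
    div_pow, div_pow, hn, sq_sqrt hq, sq_sqrt hp.le]
  field_simp

theorem vVec_normSq_general (n : ℕ)
    (p q : ℝ) (hp0 : 0 < p) (hq0 : 0 < q) (hpq : p + q = 1)
    (m : ℕ) (hm1 : 1 ≤ m) (hmn : m ≤ n) :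
    ∑ j : Fin (n + 2), (vVec p q n m j) ^ 2 =
      ((n + 1 : ℝ) / (2 * p)) * (1 - (lamEig p q n m) ^ 2) / (Real.sin (thetaAngle n m)) ^ 2 := by
  have hs := (sin_thetaAngle_pos hm1 hmn).ne'
  rw [Fin.sum_univ_succ, Fin.sum_univ_castSucc, Fin.succ_last, vVec_zero,
    vVec_last_sq hp0 hq0.le hs]
  simp only [vVec_succ_castSucc hp0 hq0 hpq hs, div_pow]
  rw [← sum_div, Fin.sum_univ_eq_sum_range
      (fun i : ℕ => (p * sin ((i + 2) * thetaAngle n m) - q * sin (i * thetaAngle n m)) ^ 2),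
    sum_range_sq_mul_sin_sub_mul_sin p q hs (sin_succ_mul_thetaAngle n m)]
  have hlam : lamEig p q n m ^ 2 = 4 * p * q * (1 - sin (thetaAngle n m) ^ 2) := by
    rw [lamEig, mul_pow, mul_pow, sq_sqrt (by positivity), cos_sq']
    ring
  rw [hlam, mul_pow, sq_sqrt hp0.le]
  field_simp
  linear_combination ((n + 1 - 2 * sin (thetaAngle n m) ^ 2) * (p + q + 1)
    + 2 * sin (thetaAngle n m) ^ 2) * hpq

/-- **Lemma.** For each `1 ≤ m ≤ n`, the squared Euclidean norm of `v_m` is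
`‖v_m‖² = ((n+1)/(2p))·(1 - λ_m²)/sin²θ_m`. -/
theorem vVec_normSq (n : ℕ) (hn : 1 ≤ n)
    (p q : ℝ) (hp0 : 0 < p) (hp1 : p < 1) (hq0 : 0 < q) (hq1 : q < 1) (hpq : p + q = 1)
    (m : ℕ) (hm1 : 1 ≤ m) (hmn : m ≤ n) :
    ∑ j : Fin (n + 2), (vVec p q n m j) ^ 2 =
      ((n + 1 : ℝ) / (2 * p)) * (1 - (lamEig p q n m) ^ 2) / (Real.sin (thetaAngle n m)) ^ 2 :=
  vVec_normSq_general n p q hp0 hq0 hpq m hm1 hmn
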